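/- Let d ≥ 1 be an integer and η ≥ 0. For each integer t ≥ 1, each μ ∈ M_l and each ν ∈ Nin(μ), let M_{t,μ,ν} be a real d×d matrix such that ∑_{ν∈Nin(μ)} M_{t,μ,ν} = I_d for every μ ∈ M_l and ‖M_{t,μ,ν} − P_{t,μ,ν} I_d‖_op ≤ η for every edge (ν, μ) ∈ E. For x ≥ 1, 0 ≤ ℓ ≤ x and v ∈ M_l^∞, let L_{x,ℓ,v}(μ) denote the set of E-paths v_1 → v_2 → ⋯ → v_x → μ of length x ending at μ with v_{x−ℓ+1} = v and with v_{x−ℓ+2}, …, v_x, μ all not in M_l^∞ (for ℓ = 0 this reads μ = v ∈ M_l^∞ with no further constraint). Set c₁ = (1 + η/α)(1 − α^K)^{1/K} and c₂ = α^K − K·η/(α·(1 − α^K)^{1/K+1}·(1 − c₁)²), and assume c₁ ∈ (0,1). Then for every μ ∈ M_l^c and every integer t ≥ K: ‖ ∑_{x=1}^{t} ∑_{v∈M_l^∞} ∑_{ℓ=0}^{x} ∑_{paths in L_{x,ℓ,v}(μ)} M_{t,μ,v_x} M_{t−1,v_x,v_{x−1}} ⋯ M_{t−x+1,v_2,v_1}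 ‖_op ≥ t·c₂ − α^K·(K − 1). Moreover, for every μ ∈ M_l^nc the corresponding sum of matrix products is the zero matrix. -/

import Mathlib

/-!
Counting each path by its last visit to `MlInf E`, the sum in the theorem is `∑ x, G x`, where
`G x` is the matrix mass of the backward paths of length `x` from `μ` into `MlInf E`. Replacing
every `M` by `P • 1` gives the scalar mass `j x ∈ [0, 1]`: it is `1` on `MlInf E`, and at least
`α ^ K` on `Mlc E` once `x ≥ K`, since every vertex of `Mlc E` lies within `K` steps of
`MlInf E`. The error `G x - j x • 1` satisfies a recursion with source term at most `K η` per
step, supported on `Mlc E \ MlInf E`; paths staying in that set lose a fraction `α ^ K` of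
their mass every `K` steps, so a geometric series bounds the error uniformly in `x` by the
constant `C` of the theorem. Hence `‖∑ x, G x‖ ≥ ∑ x, j x - t C ≥ (t - K + 1) α ^ K - t C`.
For `μ ∈ Mlnc E` no path from `MlInf E` reaches `μ`, so every sum is empty.
-/

open Matrix Finset Filter

noncomputable section

/-- In-neighbourhood of `μ` in the directed graph with edge set `E`. -/
def Nin {K : ℕ} (E : Finset (Fin K × Fin K)) (μ : Fin K) : Finset (Fin K) :=
  Finset.univ.filter (fun ν => (ν, μ) ∈ E)

/-- The set of learning models (those with at least one incoming edge). -/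
def Ml {K : ℕ} (E : Finset (Fin K × Fin K)) : Finset (Fin K) :=
  Finset.univ.filter (fun μ => Nin E μ ≠ ∅)

/-- The set of models with no incoming edge (stable data sources). -/
def Mu {K : ℕ} (E : Finset (Fin K × Fin K)) : Finset (Fin K) :=
  Finset.univ.filter (fun μ => Nin E μ = ∅)

/-- The edge relation: `EdgeRel E a b` iff `(a, b) ∈ E`. -/
def EdgeRel {K : ℕ} (E : Finset (Fin K × Fin K)) : Fin K → Fin K → Prop :=
  fun a b => (a, b) ∈ E

open Classical in
/-- Models in `M_l` not reachable by a directed path from any node of `M_u`. -/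
def MlInf {K : ℕ} (E : Finset (Fin K × Fin K)) : Finset (Fin K) :=
  (Ml E).filter (fun μ => ∀ ν ∈ Mu E, ¬ Relation.TransGen (EdgeRel E) ν μ)

open Classical in
/-- Models in `M_l^∞` together with models reachable from some node of `M_l^∞`. -/
def Mlc {K : ℕ} (E : Finset (Fin K × Fin K)) : Finset (Fin K) :=
  (Ml E).filter (fun μ => μ ∈ MlInf E ∨ ∃ ν ∈ MlInf E, Relation.TransGen (EdgeRel E) ν μ)

/-- The non-collapsing learning models. -/
def Mlnc {K : ℕ} (E : Finset (Fin K × Fin K)) : Finset (Fin K) := Ml E \ Mlc E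

/-- `Jmat P t s = P_t P_{t−1} ⋯ P_s` (equal to `I` when `s = t + 1`). -/
def Jmat {K : ℕ} (P : ℕ → Matrix (Fin K) (Fin K) ℝ) (t s : ℕ) : Matrix (Fin K) (Fin K) ℝ :=
  ((List.range' s (t + 1 - s)).reverse.map P).prod

/-- The `E`-paths `v_1 → ⋯ → v_x → μ` of length `x` ending at `μ`, encoded as a function
`v : Fin (x+1) → Fin K` with `v x = μ` and `(v i, v (i+1)) ∈ E` for all `i < x`. -/
def pathsTo {K : ℕ} (E : Finset (Fin K × Fin K)) (x : ℕ) (μ : Fin K) :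
    Finset (Fin (x + 1) → Fin K) :=
  Finset.univ.filter (fun v => v (Fin.last x) = μ ∧ ∀ i : Fin x, (v i.castSucc, v i.succ) ∈ E)

/-- The ℓ²-operator norm of a real matrix. -/
def opNorm {m n : ℕ} (A : Matrix (Fin m) (Fin n) ℝ) : ℝ :=
  ‖(Matrix.toEuclideanLin A).toContinuousLinearMap‖

/-- The ordered product of matrices along a path: for a path `v : Fin (x+1) → Fin K`
(representing `v_1, …, v_{x+1}`), `pathProd M t x v = M_{t,v_{x+1},v_x} ⋯ M_{t−x+1,v_2,v_1}`. -/
def pathProd {K d : ℕ} (M : ℕ → Fin K → Fin K → Matrix (Fin d) (Fin d) ℝ) :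
    (t : ℕ) → (x : ℕ) → (Fin (x + 1) → Fin K) → Matrix (Fin d) (Fin d) ℝ
  | _, 0, _ => 1
  | t, x + 1, v =>
      M t (v (Fin.last (x + 1))) (v (Fin.last x).castSucc) *
        pathProd M (t - 1) x (fun i => v i.castSucc)

end

open scoped Matrix.Norms.L2Operator

section Graph

variable {K : ℕ} (E : Finset (Fin K × Fin K))

lemma mem_Nin {a μ : Fin K} : a ∈ Nin E μ ↔ (a, μ) ∈ E := by simp [Nin]

lemma notMem_Ml {μ : Fin K} : μ ∉ Ml E ↔ Nin E μ = ∅ := by simp [Ml]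

lemma sum_Nin_le_one {A : ℕ → Fin K → Fin K → ℝ}
    (hA : ∀ t, 1 ≤ t → ∀ μ ∈ Ml E, ∑ ν ∈ Nin E μ, A t μ ν = 1) :
    ∀ t, 1 ≤ t → ∀ μ, ∑ ν ∈ Nin E μ, A t μ ν ≤ 1 := by
  intro t ht μ
  by_cases hμ : μ ∈ Ml E
  · exact (hA t ht μ hμ).le
  · simp [(notMem_Ml E).1 hμ]

lemma mem_Ml_of_mem_Nin {a μ : Fin K} (h : a ∈ Nin E μ) : μ ∈ Ml E := by
  by_contra hμ
  simp [(notMem_Ml E).1 hμ] at h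

lemma mem_MlInf {μ : Fin K} :
    μ ∈ MlInf E ↔ μ ∈ Ml E ∧ ∀ ν ∈ Mu E, ¬ Relation.TransGen (EdgeRel E) ν μ := by
  simp [MlInf]

lemma mem_Mlc {μ : Fin K} : μ ∈ Mlc E ↔
    μ ∈ Ml E ∧ (μ ∈ MlInf E ∨ ∃ ν ∈ MlInf E, Relation.TransGen (EdgeRel E) ν μ) := by
  simp [Mlc]

lemma MlInf_subset_Ml : MlInf E ⊆ Ml E := fun _ h => ((mem_MlInf E).1 h).1

lemma MlInf_subset_Mlc : MlInf E ⊆ Mlc E :=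
  fun _ h => (mem_Mlc E).2 ⟨MlInf_subset_Ml E h, Or.inl h⟩

lemma mem_MlInf_of_mem_Nin {a μ : Fin K} (hμ : μ ∈ MlInf E) (ha : a ∈ Nin E μ) :
    a ∈ MlInf E := by
  have hedge : EdgeRel E a μ := (mem_Nin E).1 ha
  refine (mem_MlInf E).2 ⟨?_, fun ν hν h => ((mem_MlInf E).1 hμ).2 ν hν (h.tail hedge)⟩
  by_contra haMl
  exact ((mem_MlInf E).1 hμ).2 a (by simpa [Mu] using (notMem_Ml E).1 haMl)
    (Relation.TransGen.single hedge)

lemma mem_Mlc_of_mem_Nin {a μ : Fin K} (ha : a ∈ Mlc E) (h : a ∈ Nin E μ) : μ ∈ Mlc E := by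
  have hedge : EdgeRel E a μ := (mem_Nin E).1 h
  refine (mem_Mlc E).2 ⟨mem_Ml_of_mem_Nin E h, Or.inr ?_⟩
  rcases ((mem_Mlc E).1 ha).2 with ha | ⟨ν, hν, hνa⟩
  · exact ⟨a, ha, .single hedge⟩
  · exact ⟨ν, hν, hνa.tail hedge⟩

noncomputable def reachWithin : ℕ → Finset (Fin K)
  | 0 => MlInf E
  | n + 1 => reachWithin n ∪ univ.filter (fun μ => ∃ a ∈ reachWithin n, (a, μ) ∈ E)

lemma mem_reachWithin_succ {n : ℕ} {μ : Fin K} : μ ∈ reachWithin E (n + 1) ↔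
    μ ∈ reachWithin E n ∨ ∃ a ∈ reachWithin E n, (a, μ) ∈ E := by
  simp [reachWithin]

lemma reachWithin_mono : Monotone (reachWithin E) :=
  monotone_nat_of_le_succ fun _ => subset_union_left

lemma reachWithin_eq_of_succ_eq {n : ℕ} (h : reachWithin E (n + 1) = reachWithin E n) :
    ∀ m, n ≤ m → reachWithin E m = reachWithin E n := by
  intro m hm
  induction m, hm using Nat.le_induction with
  | base => rfl
  | succ m _ ih =>
    show reachWithin E m ∪ _ = _
    rw [ih]
    exact h

lemma exists_reachWithin_succ_eq : ∃ n ≤ K, reachWithin E (n + 1) = reachWithin E n := by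
  by_contra! hne
  have hcard : ∀ n ≤ K + 1, n ≤ #(reachWithin E n) := by
    intro n hn
    induction n with
    | zero => exact Nat.zero_le _
    | succ n ih =>
      have hss : reachWithin E n ⊂ reachWithin E (n + 1) :=
        (reachWithin_mono E n.le_succ).ssubset_of_ne (hne n (by omega)).symm
      exact (ih (by omega)).trans_lt (card_lt_card hss)
  have := (hcard (K + 1) le_rfl).trans (card_le_univ _)
  simp at this

lemma mem_reachWithin_of_transGen {v μ : Fin K} (hv : v ∈ MlInf E)
    (h : Relation.TransGen (EdgeRel E) v μ) : ∃ n, μ ∈ reachWithin E n := by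
  induction h with
  | single he => exact ⟨1, (mem_reachWithin_succ E).2 (Or.inr ⟨v, hv, he⟩)⟩
  | tail _ he ih =>
    obtain ⟨n, hn⟩ := ih
    exact ⟨n + 1, (mem_reachWithin_succ E).2 (Or.inr ⟨_, hn, he⟩)⟩

/-- The layers `reachWithin E n` can grow strictly at most `K` times. -/
lemma Mlc_subset_reachWithin : Mlc E ⊆ reachWithin E K := by
  intro μ hμ
  obtain ⟨n, hnK, hstab⟩ := exists_reachWithin_succ_eq E
  have hle : ∀ m, reachWithin E m ⊆ reachWithin E K := by
    intro m
    rcases le_total m K with h | h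
    · exact reachWithin_mono E h
    · rw [reachWithin_eq_of_succ_eq E hstab m (hnK.trans h)]
      exact reachWithin_mono E hnK
  rcases ((mem_Mlc E).1 hμ).2 with h | ⟨ν, hν, hνμ⟩
  · exact hle 0 h
  · obtain ⟨m, hm⟩ := mem_reachWithin_of_transGen E hν hνμ
    exact hle m hm

end Graph

section PathMass

variable {K : ℕ} (E : Finset (Fin K × Fin K))

/-- Total weight of the backward paths of length `x` from `μ` into `S`; the `i`-th step back
is weighted by `A (s - i)`. -/
def pathMass {R : Type*} [Semiring R] (A : ℕ → Fin K → Fin K → R) (S : Finset (Fin K)) :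
    ℕ → ℕ → Fin K → R
  | _, 0, μ => if μ ∈ S then 1 else 0
  | s, x + 1, μ => ∑ a ∈ Nin E μ, A s μ a * pathMass A S (s - 1) x a

section Semiring

variable {R : Type*} [Semiring R] (A : ℕ → Fin K → Fin K → R) (S : Finset (Fin K))

@[simp] lemma pathMass_zero (s : ℕ) (μ : Fin K) :
    pathMass E A S s 0 μ = if μ ∈ S then 1 else 0 := rfl

lemma pathMass_succ (s x : ℕ) (μ : Fin K) :
    pathMass E A S s (x + 1) μ = ∑ a ∈ Nin E μ, A s μ a * pathMass E A S (s - 1) x a := rfl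

lemma pathMass_MlInf_eq_one (hA : ∀ s, 1 ≤ s → ∀ μ ∈ Ml E, ∑ a ∈ Nin E μ, A s μ a = 1) :
    ∀ {x s : ℕ} {μ : Fin K}, x ≤ s → μ ∈ MlInf E → pathMass E A (MlInf E) s x μ = 1
  | 0, _, μ, _, hμ => by simp [hμ]
  | x + 1, s, μ, hx, hμ => by
    rw [pathMass_succ, ← hA s (by omega) μ (MlInf_subset_Ml E hμ)]
    refine sum_congr rfl fun a ha => ?_
    rw [pathMass_MlInf_eq_one hA (by omega) (mem_MlInf_of_mem_Nin E hμ ha), mul_one]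

lemma pathMass_MlInf_eq_zero :
    ∀ {x s : ℕ} {μ : Fin K}, μ ∉ Mlc E → pathMass E A (MlInf E) s x μ = 0
  | 0, _, μ, hμ => by rw [pathMass_zero, if_neg fun h => hμ (MlInf_subset_Mlc E h)]
  | x + 1, s, μ, hμ => sum_eq_zero fun a ha => by
    rw [pathMass_MlInf_eq_zero fun h => hμ (mem_Mlc_of_mem_Nin E h ha), mul_zero]

end Semiring

section Real

variable (A : ℕ → Fin K → Fin K → ℝ) (S : Finset (Fin K))

lemma pathMass_nonneg (hA : ∀ s, 1 ≤ s → ∀ μ a, 0 ≤ A s μ a) :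
    ∀ {x s : ℕ} {μ : Fin K}, x ≤ s → 0 ≤ pathMass E A S s x μ
  | 0, _, _, _ => by simp only [pathMass_zero]; split_ifs <;> norm_num
  | x + 1, s, μ, hx => sum_nonneg fun a _ =>
    mul_nonneg (hA s (by omega) μ a) (pathMass_nonneg hA (by omega))

lemma pathMass_add_le (hA : ∀ s, 1 ≤ s → ∀ μ a, 0 ≤ A s μ a)
    (hA₁ : ∀ s, 1 ≤ s → ∀ μ, ∑ a ∈ Nin E μ, A s μ a ≤ 1) {r : ℕ} {c : ℝ} (hc : 0 ≤ c)
    (h : ∀ s μ, r ≤ s → pathMass E A S s r μ ≤ c) :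
    ∀ {m s : ℕ} {μ : Fin K}, m + r ≤ s → pathMass E A S s (m + r) μ ≤ c
  | 0, s, μ, hs => by simpa using h s μ (by omega)
  | m + 1, s, μ, hs => by
    rw [show m + 1 + r = m + r + 1 by omega, pathMass_succ]
    calc ∑ a ∈ Nin E μ, A s μ a * pathMass E A S (s - 1) (m + r) a
        ≤ ∑ a ∈ Nin E μ, A s μ a * c := sum_le_sum fun a _ =>
          mul_le_mul_of_nonneg_left (pathMass_add_le hA hA₁ hc h (by omega)) (hA s (by omega) μ a)
      _ ≤ c := by
          rw [← sum_mul]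
          exact mul_le_of_le_one_left hc (hA₁ s (by omega) μ)

lemma pathMass_le_one (hA : ∀ s, 1 ≤ s → ∀ μ a, 0 ≤ A s μ a)
    (hA₁ : ∀ s, 1 ≤ s → ∀ μ, ∑ a ∈ Nin E μ, A s μ a ≤ 1) {x s : ℕ} {μ : Fin K} (hx : x ≤ s) :
    pathMass E A S s x μ ≤ 1 := by
  have h0 : ∀ s μ, 0 ≤ s → pathMass E A S s 0 μ ≤ 1 := fun _ _ _ => by
    rw [pathMass_zero]; split_ifs <;> norm_num
  simpa using pathMass_add_le E A S hA hA₁ zero_le_one h0 (m := x) (s := s) (μ := μ) hx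

lemma pathMass_MlInf_ge_pow {α : ℝ} (hα0 : 0 ≤ α) (hα1 : α ≤ 1)
    (hA : ∀ s, 1 ≤ s → ∀ μ a, 0 ≤ A s μ a)
    (hArow : ∀ s, 1 ≤ s → ∀ μ ∈ Ml E, ∑ a ∈ Nin E μ, A s μ a = 1)
    (hAα : ∀ s, 1 ≤ s → ∀ ν μ : Fin K, (ν, μ) ∈ E → α ≤ A s μ ν) :
    ∀ {n x s : ℕ} {μ : Fin K}, μ ∈ reachWithin E n → n ≤ x → x ≤ s →
      α ^ n ≤ pathMass E A (MlInf E) s x μ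
  | 0, x, s, μ, hμ, _, hx => by
    rw [pathMass_MlInf_eq_one E A hArow hx hμ, pow_zero]
  | n + 1, x, s, μ, hμ, hn, hx => by
    rcases (mem_reachWithin_succ E).1 hμ with hμ | ⟨a, ha, hedge⟩
    · exact (pow_le_pow_of_le_one hα0 hα1 n.le_succ).trans
        (pathMass_MlInf_ge_pow hα0 hα1 hA hArow hAα hμ (by omega) hx)
    obtain ⟨x, rfl⟩ : ∃ x', x = x' + 1 := ⟨x - 1, by omega⟩
    rw [pathMass_succ, pow_succ']
    calc α * α ^ n ≤ A s μ a * pathMass E A (MlInf E) (s - 1) x a :=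
          mul_le_mul (hAα s (by omega) a μ hedge)
            (pathMass_MlInf_ge_pow hα0 hα1 hA hArow hAα ha (by omega) (by omega))
            (pow_nonneg hα0 n) (hA s (by omega) μ a)
      _ ≤ _ := single_le_sum (f := fun b => A s μ b * pathMass E A (MlInf E) (s - 1) x b)
            (fun b _ => mul_nonneg (hA s (by omega) μ b)
            (pathMass_nonneg E A _ hA (by omega))) ((mem_Nin E).2 hedge)

end Real

end PathMass

lemma sum_mul_le_one_sub_mul_of_mem {ι : Type*} [DecidableEq ι] {T : Finset ι} {w f : ι → ℝ}
    {a : ι} {α δ c : ℝ} (ha : a ∈ T) (hw : ∀ b ∈ T, 0 ≤ w b) (hw₁ : ∑ b ∈ T, w b ≤ 1)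
    (hwa : α ≤ w a) (hf : ∀ b ∈ T, f b ≤ c) (hfa : f a ≤ (1 - δ) * c) (hδ : 0 ≤ δ) (hc : 0 ≤ c) :
    ∑ b ∈ T, w b * f b ≤ (1 - α * δ) * c := by
  have hrest : ∑ b ∈ T.erase a, w b * f b ≤ (∑ b ∈ T, w b - w a) * c := by
    rw [← add_sum_erase T w ha, add_sub_cancel_left, sum_mul]
    exact sum_le_sum fun b hb =>
      mul_le_mul_of_nonneg_left (hf b (mem_of_mem_erase hb)) (hw b (mem_of_mem_erase hb))
  have hδc : α * (δ * c) ≤ w a * (δ * c) := mul_le_mul_of_nonneg_right hwa (by positivity)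
  rw [← add_sum_erase T _ ha]
  nlinarith [mul_le_mul_of_nonneg_left hfa (hw a ha), mul_le_mul_of_nonneg_right hw₁ hc]

section PathMassWithin

variable {K : ℕ} (E : Finset (Fin K × Fin K)) (A : ℕ → Fin K → Fin K → ℝ) (S : Finset (Fin K))

noncomputable def pathMassWithin : ℕ → ℕ → Fin K → ℝ :=
  pathMass E (fun s μ a => if μ ∈ S then A s μ a else 0) S

lemma pathMassWithin_eq_zero {x s : ℕ} {μ : Fin K} (hμ : μ ∉ S) :
    pathMassWithin E A S s x μ = 0 := by
  cases x <;> simp [pathMassWithin, pathMass_succ, hμ]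

lemma pathMassWithin_succ {x s : ℕ} {μ : Fin K} (hμ : μ ∈ S) :
    pathMassWithin E A S s (x + 1) μ =
      ∑ a ∈ Nin E μ, A s μ a * pathMassWithin E A S (s - 1) x a := by
  simp [pathMassWithin, pathMass_succ, hμ]

variable {A}

lemma pathMassWithin_zero_of_mem {s : ℕ} {μ : Fin K} (hμ : μ ∈ S) :
    pathMassWithin E A S s 0 μ = 1 := by
  simp [pathMassWithin, hμ]

variable (hA : ∀ s, 1 ≤ s → ∀ μ a, 0 ≤ A s μ a)
  (hA₁ : ∀ s, 1 ≤ s → ∀ μ, ∑ a ∈ Nin E μ, A s μ a ≤ 1)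
include hA

lemma pathMassWithin_nonneg {x s : ℕ} {μ : Fin K} (hx : x ≤ s) :
    0 ≤ pathMassWithin E A S s x μ :=
  pathMass_nonneg E _ S (fun s hs μ a => by split_ifs <;> simp [hA s hs μ a]) hx

include hA₁

lemma pathMassWithin_add_le {r : ℕ} {c : ℝ} (hc : 0 ≤ c)
    (h : ∀ s μ, r ≤ s → pathMassWithin E A S s r μ ≤ c) {m s : ℕ} {μ : Fin K}
    (hs : m + r ≤ s) : pathMassWithin E A S s (m + r) μ ≤ c :=
  pathMass_add_le E _ S (fun s hs μ a => by split_ifs <;> simp [hA s hs μ a])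
    (fun s hs μ => by split_ifs <;> simp [hA₁ s hs μ]) hc h hs

lemma pathMassWithin_le_one {x s : ℕ} {μ : Fin K} (hx : x ≤ s) :
    pathMassWithin E A S s x μ ≤ 1 :=
  pathMass_le_one E _ S (fun s hs μ a => by split_ifs <;> simp [hA s hs μ a])
    (fun s hs μ => by split_ifs <;> simp [hA₁ s hs μ]) hx

variable {α : ℝ} (hα0 : 0 ≤ α) (hα1 : α ≤ 1)
  (hAα : ∀ s, 1 ≤ s → ∀ ν μ : Fin K, (ν, μ) ∈ E → α ≤ A s μ ν)
include hα0 hα1 hAα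

/-- Along a path of length `n` from `MlInf E` to `μ`, read backwards, every step has weight at
least `α`, so at least `α ^ n` of the mass leaves `Mlc E \ MlInf E`. -/
lemma pathMassWithin_le_of_mem_reachWithin {r : ℕ} {c : ℝ} (hc : 0 ≤ c)
    (h : ∀ s μ, r ≤ s → pathMassWithin E A (Mlc E \ MlInf E) s r μ ≤ c) :
    ∀ {n m s : ℕ} {μ : Fin K}, μ ∈ reachWithin E n → n ≤ m → m + r ≤ s →
      pathMassWithin E A (Mlc E \ MlInf E) s (m + r) μ ≤ (1 - α ^ n) * c
  | 0, m, s, μ, hμ, _, _ => by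
    have hμ : μ ∈ MlInf E := hμ
    rw [pathMassWithin_eq_zero E _ _ fun h => (mem_sdiff.1 h).2 hμ]
    simp
  | n + 1, m, s, μ, hμ, hnm, hs => by
    have hαn : α ^ (n + 1) ≤ α ^ n := pow_le_pow_of_le_one hα0 hα1 n.le_succ
    rcases (mem_reachWithin_succ E).1 hμ with hμ | ⟨a, ha, hedge⟩
    · exact (pathMassWithin_le_of_mem_reachWithin hc h hμ (by omega) hs).trans
        (mul_le_mul_of_nonneg_right (by linarith) hc)
    by_cases hμS : μ ∉ Mlc E \ MlInf E
    · rw [pathMassWithin_eq_zero E _ _ hμS]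
      exact mul_nonneg (by linarith [pow_le_one₀ hα0 hα1 (n := n + 1)]) hc
    obtain ⟨m, rfl⟩ : ∃ m', m = m' + 1 := ⟨m - 1, by omega⟩
    rw [show m + 1 + r = m + r + 1 by omega, pathMassWithin_succ E _ _ (not_not.1 hμS), pow_succ']
    exact sum_mul_le_one_sub_mul_of_mem ((mem_Nin E).2 hedge) (fun b _ => hA s (by omega) μ b)
      (hA₁ s (by omega) μ) (hAα s (by omega) a μ hedge)
      (fun b _ => pathMassWithin_add_le E _ hA hA₁ hc h (m := m) (s := s - 1) (by omega))
      (pathMassWithin_le_of_mem_reachWithin hc h ha (by omega) (by omega))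
      (pow_nonneg hα0 n) hc

lemma pathMassWithin_K_add_le {r : ℕ} {c : ℝ} (hc : 0 ≤ c)
    (h : ∀ s μ, r ≤ s → pathMassWithin E A (Mlc E \ MlInf E) s r μ ≤ c) {s : ℕ} {μ : Fin K}
    (hs : K + r ≤ s) : pathMassWithin E A (Mlc E \ MlInf E) s (K + r) μ ≤ (1 - α ^ K) * c := by
  by_cases hμ : μ ∈ Mlc E \ MlInf E
  · exact pathMassWithin_le_of_mem_reachWithin E hA hA₁ hα0 hα1 hAα hc h
      (Mlc_subset_reachWithin E (mem_sdiff.1 hμ).1) le_rfl hs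
  · rw [pathMassWithin_eq_zero E _ _ hμ]
    exact mul_nonneg (by linarith [pow_le_one₀ hα0 hα1 (n := K)]) hc

lemma pathMassWithin_le_pow_div {x s : ℕ} {μ : Fin K} (hx : x ≤ s) :
    pathMassWithin E A (Mlc E \ MlInf E) s x μ ≤ (1 - α ^ K) ^ (x / K) := by
  have hb : 0 ≤ 1 - α ^ K := by linarith [pow_le_one₀ hα0 hα1 (n := K)]
  suffices ∀ q r s μ, q * K + r ≤ s →
      pathMassWithin E A (Mlc E \ MlInf E) s (q * K + r) μ ≤ (1 - α ^ K) ^ q by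
    simpa [Nat.div_add_mod'] using this (x / K) (x % K) s μ (by rwa [Nat.div_add_mod'])
  intro q
  induction q with
  | zero => intro r s μ hs; simpa using pathMassWithin_le_one E _ hA hA₁ (by simpa using hs)
  | succ q ih =>
    intro r s μ hs
    rw [show (q + 1) * K + r = K + (q * K + r) by ring, pow_succ']
    exact pathMassWithin_K_add_le E hA hA₁ hα0 hα1 hAα (pow_nonneg hb q)
      (fun s μ hs => ih r s μ hs) (by linarith)

end PathMassWithin

lemma norm_le_of_norm_sub_smul_one {𝒜 : Type*} [NormedRing 𝒜] [NormedAlgebra ℝ 𝒜]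
    [NormOneClass 𝒜] {A : 𝒜} {p α η : ℝ} (hA : ‖A - p • (1 : 𝒜)‖ ≤ η) (hα : 0 < α)
    (hp : α ≤ p) : ‖A‖ ≤ (1 + η / α) * p := by
  have hη : η ≤ η / α * p := by
    rw [div_mul_eq_mul_div, le_div_iff₀ hα]
    exact mul_le_mul_of_nonneg_left hp ((norm_nonneg _).trans hA)
  calc ‖A‖ ≤ ‖A - p • (1 : 𝒜)‖ + ‖p • (1 : 𝒜)‖ := norm_le_norm_sub_add _ _
    _ ≤ η + p := by
        rw [norm_smul, norm_one, mul_one, Real.norm_of_nonneg (hα.le.trans hp)]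
        linarith
    _ ≤ (1 + η / α) * p := by linarith

lemma pow_div_le_rpow {b : ℝ} (hb0 : 0 < b) (hb1 : b ≤ 1) {K : ℕ} (hK : 0 < K) (r : ℕ) :
    b ^ (r / K) ≤ (b ^ ((1 : ℝ) / K)) ^ r / b := by
  have hKR : (0 : ℝ) < K := by exact_mod_cast hK
  rw [← Real.rpow_natCast (b ^ _), ← Real.rpow_mul hb0.le, ← Real.rpow_sub_one hb0.ne',
    ← Real.rpow_natCast]
  refine Real.rpow_le_rpow_of_exponent_ge hb0 hb1 ?_
  have hr : (r : ℝ) < (r / K : ℕ) * K + K := by exact_mod_cast Nat.lt_div_mul_add hK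
  rw [one_div_mul_eq_div, sub_le_iff_le_add, div_le_iff₀ hKR]
  linarith

lemma sum_pow_mul_pow_div_le {b β : ℝ} (hb0 : 0 < b) (hb1 : b ≤ 1) (hβ : 0 ≤ β) {K : ℕ}
    (hK : 0 < K) (hc : β * b ^ ((1 : ℝ) / K) < 1) (x : ℕ) :
    ∑ r ∈ range x, β ^ (r + 1) * b ^ (r / K) ≤ β / (b * (1 - β * b ^ ((1 : ℝ) / K))) := by
  have hc0 : 0 ≤ β * b ^ ((1 : ℝ) / K) := by positivity
  calc ∑ r ∈ range x, β ^ (r + 1) * b ^ (r / K)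
      ≤ ∑ r ∈ range x, β / b * (β * b ^ ((1 : ℝ) / K)) ^ r := sum_le_sum fun r _ => by
        calc β ^ (r + 1) * b ^ (r / K) ≤ β ^ (r + 1) * ((b ^ ((1 : ℝ) / K)) ^ r / b) :=
              mul_le_mul_of_nonneg_left (pow_div_le_rpow hb0 hb1 hK r) (by positivity)
          _ = β / b * (β * b ^ ((1 : ℝ) / K)) ^ r := by ring
    _ ≤ β / b * (1 / (1 - β * b ^ ((1 : ℝ) / K))) := by
        rw [← mul_sum, range_eq_Ico]
        exact mul_le_mul_of_nonneg_left
          (by simpa using geom_sum_Ico_le_of_lt_one (m := 0) (n := x) hc0 hc) (by positivity)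
    _ = β / (b * (1 - β * b ^ ((1 : ℝ) / K))) := by field_simp

lemma div_le_one_div_sq {α b u β : ℝ} (hα0 : 0 < α) (hα1 : α ≤ 1) (hb : 0 < b) (hu : 0 < u)
    (hβ : 0 ≤ β) (hc : β * u < 1) :
    β / (b * (1 - β * u)) ≤ 1 / (α * (u * b) * (1 - β * u) ^ 2) := by
  have h1c : 0 < 1 - β * u := by linarith
  have hc0 : 0 ≤ β * u := by positivity
  rw [div_le_div_iff₀ (by positivity) (by positivity)]
  have hαc : α * (β * u) * (1 - β * u) ≤ 1 :=
    mul_le_one₀ (mul_le_one₀ hα1 hc0 hc.le) h1c.le (by linarith)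
  calc β * (α * (u * b) * (1 - β * u) ^ 2)
      = (α * (β * u) * (1 - β * u)) * (b * (1 - β * u)) := by ring
    _ ≤ 1 * (b * (1 - β * u)) := mul_le_mul_of_nonneg_right hαc (by positivity)

section MassError

variable {K : ℕ} (E : Finset (Fin K × Fin K)) (P : ℕ → Fin K → Fin K → ℝ) {d : ℕ}
  (M : ℕ → Fin K → Fin K → Matrix (Fin d) (Fin d) ℝ)

noncomputable def massError (s x : ℕ) (μ : Fin K) : Matrix (Fin d) (Fin d) ℝ :=
  pathMass E M (MlInf E) s x μ - pathMass E P (MlInf E) s x μ • 1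

lemma massError_zero (s : ℕ) (μ : Fin K) : massError E P M s 0 μ = 0 := by
  simp only [massError, pathMass_zero]
  split_ifs <;> simp

lemma massError_succ (s x : ℕ) (μ : Fin K) :
    massError E P M s (x + 1) μ = ∑ a ∈ Nin E μ,
      (M s μ a * massError E P M (s - 1) x a +
        pathMass E P (MlInf E) (s - 1) x a • (M s μ a - P s μ a • 1)) := by
  simp only [massError, pathMass_succ, sum_smul, ← sum_sub_distrib]
  refine sum_congr rfl fun a _ => ?_
  rw [mul_sub, smul_sub, mul_smul_comm, mul_one, smul_smul, mul_comm (P s μ a)]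
  abel

lemma massError_eq_zero (hProw : ∀ t, 1 ≤ t → ∀ μ ∈ Ml E, ∑ ν ∈ Nin E μ, P t μ ν = 1)
    (hMrow : ∀ t, 1 ≤ t → ∀ μ ∈ Ml E, ∑ ν ∈ Nin E μ, M t μ ν = 1) {x s : ℕ} {μ : Fin K}
    (hx : x ≤ s) (hμ : μ ∉ Mlc E \ MlInf E) : massError E P M s x μ = 0 := by
  by_cases hInf : μ ∈ MlInf E
  · simp [massError, pathMass_MlInf_eq_one E _ hProw hx hInf,
      pathMass_MlInf_eq_one E _ hMrow hx hInf]
  · have hc : μ ∉ Mlc E := fun h => hμ (mem_sdiff.2 ⟨h, hInf⟩)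
    simp [massError, pathMass_MlInf_eq_zero E _ hc]

variable {α η : ℝ} (hα0 : 0 < α) (hη : 0 ≤ η)
  (hPnn : ∀ t, 1 ≤ t → ∀ μ ν : Fin K, 0 ≤ P t μ ν)
  (hP₁ : ∀ t, 1 ≤ t → ∀ μ, ∑ ν ∈ Nin E μ, P t μ ν ≤ 1)
  (hPα : ∀ t, 1 ≤ t → ∀ ν μ : Fin K, (ν, μ) ∈ E → α ≤ P t μ ν) (hd : 1 ≤ d)
  (hM : ∀ t, 1 ≤ t → ∀ ν μ : Fin K, (ν, μ) ∈ E → ‖M t μ ν - P t μ ν • 1‖ ≤ η)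
include hα0 hη hPnn hP₁ hPα hd hM

lemma norm_massError_succ_le {x s : ℕ} {μ : Fin K} (hx : x + 1 ≤ s) :
    ‖massError E P M s (x + 1) μ‖ ≤
      (1 + η / α) * ∑ a ∈ Nin E μ, P s μ a * ‖massError E P M (s - 1) x a‖ + K * η := by
  have : NeZero d := ⟨by omega⟩
  have hs : 1 ≤ s := by omega
  have hterm : ∀ a ∈ Nin E μ,
      ‖M s μ a * massError E P M (s - 1) x a +
          pathMass E P (MlInf E) (s - 1) x a • (M s μ a - P s μ a • 1)‖ ≤
        (1 + η / α) * (P s μ a * ‖massError E P M (s - 1) x a‖) + η := by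
    intro a ha
    have hedge := (mem_Nin E).1 ha
    have hj : ‖pathMass E P (MlInf E) (s - 1) x a‖ ≤ 1 := by
      rw [Real.norm_of_nonneg (pathMass_nonneg E P _ hPnn (by omega))]
      exact pathMass_le_one E P _ hPnn hP₁ (by omega)
    refine (norm_add_le _ _).trans (add_le_add ?_ ?_)
    · rw [← mul_assoc]
      exact (norm_mul_le _ _).trans (mul_le_mul_of_nonneg_right
        (norm_le_of_norm_sub_smul_one (hM s hs a μ hedge) hα0 (hPα s hs a μ hedge))
        (norm_nonneg _))
    · rw [norm_smul]
      exact (mul_le_of_le_one_left (norm_nonneg _) hj).trans (hM s hs a μ hedge)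
  have hcard : (#(Nin E μ) : ℝ) ≤ K := by exact_mod_cast (card_le_univ _).trans_eq (by simp)
  rw [massError_succ]
  calc _ ≤ ∑ a ∈ Nin E μ, ((1 + η / α) * (P s μ a * ‖massError E P M (s - 1) x a‖) + η) :=
        (norm_sum_le _ _).trans (sum_le_sum hterm)
    _ = (1 + η / α) * ∑ a ∈ Nin E μ, P s μ a * ‖massError E P M (s - 1) x a‖
          + #(Nin E μ) * η := by
        rw [sum_add_distrib, mul_sum, sum_const, nsmul_eq_mul]
    _ ≤ _ := add_le_add_right (mul_le_mul_of_nonneg_right hcard hη) _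

variable (hProw : ∀ t, 1 ≤ t → ∀ μ ∈ Ml E, ∑ ν ∈ Nin E μ, P t μ ν = 1)
  (hMrow : ∀ t, 1 ≤ t → ∀ μ ∈ Ml E, ∑ ν ∈ Nin E μ, M t μ ν = 1)
include hProw hMrow

/-- Errors arise at rate `K * η` per step, and only along paths that stay in `Mlc E \ MlInf E`:
on `MlInf E` both masses are `1`, outside `Mlc E` both vanish. -/
lemma norm_massError_le : ∀ {x s : ℕ} {μ : Fin K}, x ≤ s →
    ‖massError E P M s x μ‖ ≤
      K * η * ∑ r ∈ range x, (1 + η / α) ^ (r + 1) * pathMassWithin E P (Mlc E \ MlInf E) s r μ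
  | 0, s, μ, _ => by simp [massError_zero]
  | x + 1, s, μ, hx => by
    have hβ : 0 ≤ 1 + η / α := by positivity
    by_cases hμ : μ ∉ Mlc E \ MlInf E
    · rw [massError_eq_zero E P M hProw hMrow hx hμ, norm_zero]
      exact mul_nonneg (by positivity) (sum_nonneg fun r hr => mul_nonneg (by positivity)
        (pathMassWithin_nonneg E _ hPnn (by have := mem_range.1 hr; omega)))
    rw [not_not] at hμ
    have hunroll : (1 + η / α) * ∑ a ∈ Nin E μ, P s μ a *
          (K * η * ∑ r ∈ range x, (1 + η / α) ^ (r + 1) *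
            pathMassWithin E P (Mlc E \ MlInf E) (s - 1) r a) =
        K * η * ∑ r ∈ range x, (1 + η / α) ^ (r + 1 + 1) *
          pathMassWithin E P (Mlc E \ MlInf E) s (r + 1) μ := by
      simp only [pathMassWithin_succ E P _ hμ, mul_sum]
      rw [sum_comm]
      exact sum_congr rfl fun r _ => sum_congr rfl fun a _ => by ring
    calc _ ≤ _ := norm_massError_succ_le E P M hα0 hη hPnn hP₁ hPα hd hM hx
      _ ≤ (1 + η / α) * ∑ a ∈ Nin E μ, P s μ a *
            (K * η * ∑ r ∈ range x, (1 + η / α) ^ (r + 1) *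
              pathMassWithin E P (Mlc E \ MlInf E) (s - 1) r a) + K * η := by
          gcongr with a ha
          · exact hPnn s (by omega) μ a
          · exact norm_massError_le (by omega)
      _ ≤ _ := by
          rw [hunroll, sum_range_succ' _ x, mul_add, zero_add, pow_one,
            pathMassWithin_zero_of_mem E _ hμ, mul_one]
          have : 1 ≤ 1 + η / α := by simp only [le_add_iff_nonneg_right]; positivity
          nlinarith [mul_nonneg (Nat.cast_nonneg K) hη]

end MassError

section Constant

variable {K : ℕ} (E : Finset (Fin K × Fin K)) (P : ℕ → Fin K → Fin K → ℝ) {d : ℕ}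
  (M : ℕ → Fin K → Fin K → Matrix (Fin d) (Fin d) ℝ)

lemma norm_massError_le_const (hK : 1 ≤ K) {α η : ℝ} (hα0 : 0 < α) (hα1 : α < 1) (hη : 0 ≤ η)
    (hPnn : ∀ t, 1 ≤ t → ∀ μ ν : Fin K, 0 ≤ P t μ ν)
    (hProw : ∀ t, 1 ≤ t → ∀ μ ∈ Ml E, ∑ ν ∈ Nin E μ, P t μ ν = 1)
    (hPα : ∀ t, 1 ≤ t → ∀ ν μ : Fin K, (ν, μ) ∈ E → α ≤ P t μ ν) (hd : 1 ≤ d)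
    (hMrow : ∀ t, 1 ≤ t → ∀ μ ∈ Ml E, ∑ ν ∈ Nin E μ, M t μ ν = 1)
    (hM : ∀ t, 1 ≤ t → ∀ ν μ : Fin K, (ν, μ) ∈ E → ‖M t μ ν - P t μ ν • 1‖ ≤ η)
    (hc₁ : (1 + η / α) * (1 - α ^ K) ^ ((1 : ℝ) / K) < 1) {x s : ℕ} {μ : Fin K} (hx : x ≤ s) :
    ‖massError E P M s x μ‖ ≤ K * η / (α * (1 - α ^ K) ^ ((1 : ℝ) / K + 1) *
      (1 - (1 + η / α) * (1 - α ^ K) ^ ((1 : ℝ) / K)) ^ 2) := by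
  have hb0 : 0 < 1 - α ^ K := by linarith [pow_lt_one₀ hα0.le hα1 (by omega : K ≠ 0)]
  have hb1 : 1 - α ^ K ≤ 1 := by linarith [pow_pos hα0 K]
  have hβ : 0 ≤ 1 + η / α := by positivity
  have hKη : 0 ≤ K * η := by positivity
  have hP₁ := sum_Nin_le_one E hProw
  calc _ ≤ K * η * ∑ r ∈ range x, (1 + η / α) ^ (r + 1) *
        pathMassWithin E P (Mlc E \ MlInf E) s r μ :=
        norm_massError_le E P M hα0 hη hPnn hP₁ hPα hd hM hProw hMrow hx
    _ ≤ K * η * ∑ r ∈ range x, (1 + η / α) ^ (r + 1) * (1 - α ^ K) ^ (r / K) := by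
        gcongr with r hr
        exact pathMassWithin_le_pow_div E hPnn hP₁ hα0.le hα1.le hPα
          (by have := mem_range.1 hr; omega)
    _ ≤ K * η * ((1 + η / α) / ((1 - α ^ K) * (1 - (1 + η / α) * (1 - α ^ K) ^ ((1 : ℝ) / K)))) :=
        mul_le_mul_of_nonneg_left (sum_pow_mul_pow_div_le hb0 hb1 hβ (by omega) hc₁ x) hKη
    _ ≤ K * η * (1 / (α * ((1 - α ^ K) ^ ((1 : ℝ) / K) * (1 - α ^ K)) *
          (1 - (1 + η / α) * (1 - α ^ K) ^ ((1 : ℝ) / K)) ^ 2)) :=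
        mul_le_mul_of_nonneg_left (div_le_one_div_sq hα0 hα1.le hb0
          (Real.rpow_pos_of_pos hb0 _) hβ hc₁) hKη
    _ = _ := by rw [Real.rpow_add hb0, Real.rpow_one, mul_one_div]

end Constant

section Paths

variable {K : ℕ} (E : Finset (Fin K × Fin K))

lemma mem_pathsTo {x : ℕ} {μ : Fin K} {w : Fin (x + 1) → Fin K} :
    w ∈ pathsTo E x μ ↔ w (Fin.last x) = μ ∧ ∀ i : Fin x, (w i.castSucc, w i.succ) ∈ E := by
  simp [pathsTo]

lemma pathsTo_zero (μ : Fin K) : pathsTo E 0 μ = {fun _ => μ} := by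
  ext w
  rw [mem_pathsTo, mem_singleton, funext_iff, Fin.forall_fin_one]
  simp [Fin.last, IsEmpty.forall_iff]

lemma mem_pathsTo_succ {x : ℕ} {μ : Fin K} {w : Fin (x + 2) → Fin K} :
    w ∈ pathsTo E (x + 1) μ ↔ w (Fin.last (x + 1)) = μ ∧
      w (Fin.last x).castSucc ∈ Nin E μ ∧ Fin.init w ∈ pathsTo E x (w (Fin.last x).castSucc) := by
  simp only [mem_pathsTo, Fin.forall_fin_succ' (P := fun i => (w i.castSucc, w i.succ) ∈ E),
    Fin.succ_last, Fin.init, Fin.succ_castSucc, mem_Nin]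
  constructor
  · rintro ⟨h1, h2, h3⟩
    exact ⟨h1, h1 ▸ h3, trivial, h2⟩
  · rintro ⟨h1, h3, -, h2⟩
    exact ⟨h1, h2, by simpa [h1] using h3⟩

lemma sum_pathsTo_succ {γ : Type*} [AddCommMonoid γ] (x : ℕ) (μ : Fin K)
    (f : (Fin (x + 2) → Fin K) → γ) :
    ∑ w ∈ pathsTo E (x + 1) μ, f w = ∑ a ∈ Nin E μ, ∑ w ∈ pathsTo E x a, f (Fin.snoc w μ) := by
  rw [sum_sigma']
  refine sum_nbij' (fun w => ⟨w (Fin.last x).castSucc, Fin.init w⟩) (fun p => Fin.snoc p.2 μ)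
    ?_ ?_ ?_ ?_ ?_
  · intro w hw
    obtain ⟨-, ha, hinit⟩ := (mem_pathsTo_succ E).1 hw
    exact mem_sigma.2 ⟨ha, hinit⟩
  · rintro ⟨a, w⟩ hw
    obtain ⟨ha, hw⟩ := mem_sigma.1 hw
    have hlast : w (Fin.last x) = a := ((mem_pathsTo E).1 hw).1
    exact (mem_pathsTo_succ E).2 ⟨by simp, by simpa [hlast] using ha, by simpa [hlast] using hw⟩
  · intro w hw
    have hlast := ((mem_pathsTo E).1 hw).1
    simp [← hlast]
  · rintro ⟨a, w⟩ hw
    have hlast : w (Fin.last x) = a := ((mem_pathsTo E).1 (mem_sigma.1 hw).2).1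
    simp [hlast]
  · intro w hw
    have hlast := ((mem_pathsTo E).1 hw).1
    simp [← hlast, Fin.snoc_init_self]

variable {d : ℕ} (M : ℕ → Fin K → Fin K → Matrix (Fin d) (Fin d) ℝ)

lemma pathProd_snoc {x : ℕ} (s : ℕ) (w : Fin (x + 1) → Fin K) (μ : Fin K) :
    pathProd M s (x + 1) (Fin.snoc w μ) = M s μ (w (Fin.last x)) * pathProd M (s - 1) x w := by
  simp [pathProd, Fin.snoc_castSucc]

lemma sum_pathProd_eq_pathMass (S : Finset (Fin K)) :
    ∀ (x s : ℕ) (μ : Fin K),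
      ∑ w ∈ (pathsTo E x μ).filter (fun w => w 0 ∈ S), pathProd M s x w = pathMass E M S s x μ
  | 0, s, μ => by
    rw [pathsTo_zero, filter_singleton]
    split_ifs with h <;> simp [h, pathProd]
  | x + 1, s, μ => by
    rw [sum_filter, sum_pathsTo_succ, pathMass_succ]
    refine sum_congr rfl fun a _ => ?_
    rw [← sum_pathProd_eq_pathMass S x (s - 1) a, mul_sum, sum_filter]
    refine sum_congr rfl fun w hw => ?_
    rw [pathProd_snoc, ((mem_pathsTo E).1 hw).1,
      show (0 : Fin (x + 2)) = (0 : Fin (x + 1)).castSucc from rfl, Fin.snoc_castSucc]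

end Paths

section LastVisit

variable {K : ℕ} (E : Finset (Fin K × Fin K))

lemma zero_mem_MlInf_of_mem_pathsTo {x : ℕ} {μ : Fin K} {w : Fin (x + 1) → Fin K}
    (hw : w ∈ pathsTo E x μ) (i : Fin (x + 1)) (hi : w i ∈ MlInf E) : w 0 ∈ MlInf E := by
  induction i using Fin.induction with
  | zero => exact hi
  | succ i ih =>
    exact ih (mem_MlInf_of_mem_Nin E hi ((mem_Nin E).2 (((mem_pathsTo E).1 hw).2 i)))

/-- A path starting in `MlInf E` is counted exactly once on the left, under its last visit
`x - ℓ` to `MlInf E`; a path starting outside never visits `MlInf E`. -/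
lemma sum_lastVisit {γ : Type*} [AddCommMonoid γ] (x : ℕ) (μ : Fin K)
    (f : (Fin (x + 1) → Fin K) → γ) :
    ∑ v ∈ MlInf E, ∑ ℓ ∈ range (x + 1),
      ∑ w ∈ (pathsTo E x μ).filter (fun w =>
          w ⟨x - ℓ, Nat.lt_succ_of_le (Nat.sub_le x ℓ)⟩ = v ∧
          ∀ j : Fin (x + 1), x - ℓ < (j : ℕ) → w j ∉ MlInf E), f w
      = ∑ w ∈ (pathsTo E x μ).filter (fun w => w 0 ∈ MlInf E), f w := by
  rw [sum_sigma', sum_sigma']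
  refine sum_bij (fun p _ => p.2) ?_ ?_ ?_ fun _ _ => rfl
  · rintro ⟨⟨v, ℓ⟩, w⟩ h
    simp only [mem_sigma, mem_filter] at h ⊢
    obtain ⟨⟨hv, -⟩, hw, hwv, -⟩ := h
    rw [← hwv] at hv
    exact ⟨hw, zero_mem_MlInf_of_mem_pathsTo E hw _ hv⟩
  · rintro ⟨⟨v, ℓ⟩, w⟩ h ⟨⟨v', ℓ'⟩, w'⟩ h' (rfl : w = w')
    simp only [mem_sigma, mem_filter, mem_range] at h h'
    obtain ⟨⟨hv, hℓ⟩, -, hwv, hlast⟩ := h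
    obtain ⟨⟨hv', hℓ'⟩, -, hwv', hlast'⟩ := h'
    rw [← hwv] at hv
    rw [← hwv'] at hv'
    have := IsGreatest.unique (s := {j | w j ∈ MlInf E})
      ⟨hv, fun k hk => not_lt.1 fun h => hlast k h hk⟩
      ⟨hv', fun k hk => not_lt.1 fun h => hlast' k h hk⟩
    obtain rfl : ℓ = ℓ' := by simp only [Fin.mk.injEq] at this; omega
    rw [← hwv, ← hwv']
  · intro w hw
    obtain ⟨hw, h0⟩ := mem_filter.1 hw
    obtain ⟨i, hi, hmax⟩ := (univ.filter fun j => w j ∈ MlInf E).exists_maximal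
      ⟨0, mem_filter.2 ⟨mem_univ _, h0⟩⟩
    have hix : x - (x - i) = i := by omega
    refine ⟨⟨⟨w i, x - i⟩, w⟩, ?_, rfl⟩
    simp only [mem_sigma, mem_filter, mem_range, hix]
    exact ⟨⟨(mem_filter.1 hi).2, by omega⟩, hw, trivial, fun j hj hjm =>
      (not_le.2 hj) (hmax (mem_filter.2 ⟨mem_univ j, hjm⟩) (le_of_lt hj))⟩

end LastVisit

section Main

variable {K : ℕ} (E : Finset (Fin K × Fin K)) (P : ℕ → Fin K → Fin K → ℝ)

lemma le_norm_sum_pathMass (hK : 1 ≤ K) {α η : ℝ} (hα0 : 0 < α) (hα1 : α < 1) (hη : 0 ≤ η)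
    (hPnn : ∀ t, 1 ≤ t → ∀ μ ν : Fin K, 0 ≤ P t μ ν)
    (hProw : ∀ t, 1 ≤ t → ∀ μ ∈ Ml E, ∑ ν ∈ Nin E μ, P t μ ν = 1)
    (hPα : ∀ t, 1 ≤ t → ∀ ν μ : Fin K, (ν, μ) ∈ E → α ≤ P t μ ν) {d : ℕ} (hd : 1 ≤ d)
    (M : ℕ → Fin K → Fin K → Matrix (Fin d) (Fin d) ℝ)
    (hMrow : ∀ t, 1 ≤ t → ∀ μ ∈ Ml E, ∑ ν ∈ Nin E μ, M t μ ν = 1)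
    (hM : ∀ t, 1 ≤ t → ∀ ν μ : Fin K, (ν, μ) ∈ E → ‖M t μ ν - P t μ ν • 1‖ ≤ η)
    (hc₁ : (1 + η / α) * (1 - α ^ K) ^ ((1 : ℝ) / K) < 1) {μ : Fin K} (hμ : μ ∈ Mlc E)
    {t : ℕ} (ht : K ≤ t) :
    (t : ℝ) * (α ^ K - K * η / (α * (1 - α ^ K) ^ ((1 : ℝ) / K + 1) *
        (1 - (1 + η / α) * (1 - α ^ K) ^ ((1 : ℝ) / K)) ^ 2)) - α ^ K * (K - 1) ≤
      ‖∑ x ∈ Icc 1 t, pathMass E M (MlInf E) t x μ‖ := by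
  have : NeZero d := ⟨by omega⟩
  set C := K * η / (α * (1 - α ^ K) ^ ((1 : ℝ) / K + 1) *
    (1 - (1 + η / α) * (1 - α ^ K) ^ ((1 : ℝ) / K)) ^ 2)
  set T := ∑ x ∈ Icc 1 t, pathMass E P (MlInf E) t x μ
  have hsplit : ∑ x ∈ Icc 1 t, pathMass E M (MlInf E) t x μ =
      T • (1 : Matrix (Fin d) (Fin d) ℝ) + ∑ x ∈ Icc 1 t, massError E P M t x μ := by
    rw [sum_smul, ← sum_add_distrib]
    exact sum_congr rfl fun x _ => (add_sub_cancel _ _).symm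
  have hT : ((t : ℝ) - K + 1) * α ^ K ≤ T := by
    have hcard : ((t : ℝ) - K + 1) = #(Icc K t) := by
      rw [Nat.card_Icc, Nat.cast_sub (by omega)]
      push_cast
      ring
    rw [hcard, ← nsmul_eq_mul, ← sum_const]
    calc ∑ _ ∈ Icc K t, α ^ K ≤ ∑ x ∈ Icc K t, pathMass E P (MlInf E) t x μ :=
          sum_le_sum fun x hx => pathMass_MlInf_ge_pow E P hα0.le hα1.le hPnn hProw hPα
            (Mlc_subset_reachWithin E hμ) (mem_Icc.1 hx).1 (mem_Icc.1 hx).2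
      _ ≤ T := sum_le_sum_of_subset_of_nonneg (Icc_subset_Icc_left hK) fun x hx _ =>
          pathMass_nonneg E P _ hPnn (mem_Icc.1 hx).2
  have herr : ‖∑ x ∈ Icc 1 t, massError E P M t x μ‖ ≤ t * C := by
    refine (norm_sum_le _ _).trans ?_
    refine (sum_le_sum fun x hx => norm_massError_le_const E P M hK hα0 hα1 hη hPnn
      hProw hPα hd hMrow hM hc₁ (mem_Icc.1 hx).2).trans_eq ?_
    rw [sum_const, Nat.card_Icc, add_tsub_cancel_right, nsmul_eq_mul]
  have hnorm : ‖T • (1 : Matrix (Fin d) (Fin d) ℝ)‖ = T := by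
    rw [norm_smul, norm_one, mul_one, Real.norm_of_nonneg
      (sum_nonneg fun x hx => pathMass_nonneg E P _ hPnn (mem_Icc.1 hx).2)]
  have htri := norm_sub_le (T • (1 : Matrix (Fin d) (Fin d) ℝ) +
    ∑ x ∈ Icc 1 t, massError E P M t x μ) (∑ x ∈ Icc 1 t, massError E P M t x μ)
  rw [add_sub_cancel_right, hnorm, ← hsplit] at htri
  linarith

end Main

theorem stmt17_general
    {K : ℕ} (hK : 1 ≤ K)
    (E : Finset (Fin K × Fin K))
    (α : ℝ) (hα0 : 0 < α) (hα1 : α < 1)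
    (P : ℕ → Matrix (Fin K) (Fin K) ℝ)
    (hPnn : ∀ t, 1 ≤ t → ∀ μ ν : Fin K, 0 ≤ P t μ ν)
    (hProw : ∀ t, 1 ≤ t → ∀ μ ∈ Ml E, ∑ ν ∈ Nin E μ, P t μ ν = 1)
    (hPα : ∀ t, 1 ≤ t → ∀ ν μ : Fin K, (ν, μ) ∈ E → α ≤ P t μ ν)
    {d : ℕ} (hd : 1 ≤ d) (η : ℝ) (hη : 0 ≤ η)
    (M : ℕ → Fin K → Fin K → Matrix (Fin d) (Fin d) ℝ)
    (hMrow : ∀ t, 1 ≤ t → ∀ μ ∈ Ml E, ∑ ν ∈ Nin E μ, M t μ ν = 1)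
    (hM : ∀ t, 1 ≤ t → ∀ ν μ : Fin K, (ν, μ) ∈ E →
      opNorm (M t μ ν - P t μ ν • (1 : Matrix (Fin d) (Fin d) ℝ)) ≤ η)
    (hc₁1 : (1 + η / α) * (1 - α ^ K) ^ ((1 : ℝ) / K) < 1) :
    (∀ μ ∈ Mlc E, ∀ t : ℕ, K ≤ t →
      (t : ℝ) * (α ^ K - K * η / (α * (1 - α ^ K) ^ ((1 : ℝ) / K + 1) *
            (1 - (1 + η / α) * (1 - α ^ K) ^ ((1 : ℝ) / K)) ^ 2)) -
          α ^ K * (K - 1) ≤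
        opNorm (∑ x ∈ Finset.Icc 1 t, ∑ v ∈ MlInf E, ∑ ℓ ∈ Finset.range (x + 1),
          ∑ w ∈ (pathsTo E x μ).filter (fun w =>
              w ⟨x - ℓ, Nat.lt_succ_of_le (Nat.sub_le x ℓ)⟩ = v ∧
              ∀ j : Fin (x + 1), x - ℓ < (j : ℕ) → w j ∉ MlInf E),
            pathProd M t x w)) ∧
    (∀ μ ∈ Mlnc E, ∀ t : ℕ, K ≤ t →
      ∑ x ∈ Finset.Icc 1 t, ∑ v ∈ MlInf E, ∑ ℓ ∈ Finset.range (x + 1),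
          ∑ w ∈ (pathsTo E x μ).filter (fun w =>
              w ⟨x - ℓ, Nat.lt_succ_of_le (Nat.sub_le x ℓ)⟩ = v ∧
              ∀ j : Fin (x + 1), x - ℓ < (j : ℕ) → w j ∉ MlInf E),
            pathProd M t x w = 0) := by
  have hsum : ∀ μ t, ∑ x ∈ Finset.Icc 1 t, ∑ v ∈ MlInf E, ∑ ℓ ∈ Finset.range (x + 1),
      ∑ w ∈ (pathsTo E x μ).filter (fun w =>
          w ⟨x - ℓ, Nat.lt_succ_of_le (Nat.sub_le x ℓ)⟩ = v ∧
          ∀ j : Fin (x + 1), x - ℓ < (j : ℕ) → w j ∉ MlInf E), pathProd M t x w =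
      ∑ x ∈ Icc 1 t, pathMass E M (MlInf E) t x μ := fun μ t =>
    sum_congr rfl fun x _ => by rw [sum_lastVisit, sum_pathProd_eq_pathMass]
  refine ⟨fun μ hμ t ht => ?_, fun μ hμ t _ => ?_⟩
  · rw [hsum]
    exact le_norm_sum_pathMass E P hK hα0 hα1 hη hPnn hProw hPα hd M hMrow hM hc₁1 hμ ht
  · rw [hsum]
    exact sum_eq_zero fun x _ => pathMass_MlInf_eq_zero E M (Finset.mem_sdiff.1 hμ).2

/-- Let `M_{t,μ,ν}` be `d×d` matrices with `∑_{ν∈Nin(μ)} M_{t,μ,ν} = I_d` for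
every `μ ∈ M_l` and `‖M_{t,μ,ν} − P_{t,μ,ν}·I_d‖_op ≤ η` on edges. With
`c₁ = (1 + η/α)(1 − α^K)^{1/K} ∈ (0,1)` and
`c₂ = α^K − K·η/(α(1 − α^K)^{1/K+1}(1 − c₁)²)`, for every `μ ∈ M_l^c` and `t ≥ K` the
operator norm of the sum over `x = 1..t`, `v ∈ M_l^∞`, `0 ≤ ℓ ≤ x` and paths in `L_{x,ℓ,v}(μ)`
of the matrix products along the paths is at least `t·c₂ − α^K·(K−1)`; moreover for every
`μ ∈ M_l^nc` the corresponding sum is the zero matrix. -/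
theorem stmt17
    {K : ℕ} (hK : 1 ≤ K)
    (E : Finset (Fin K × Fin K))
    (α : ℝ) (hα0 : 0 < α) (hα1 : α < 1)
    (P : ℕ → Matrix (Fin K) (Fin K) ℝ)
    (hPzero : ∀ t, 1 ≤ t → ∀ μ ν : Fin K,
      ¬ ((μ ∈ Ml E ∧ ν ∈ Nin E μ) ∨ (μ = ν ∧ μ ∈ Mu E)) → P t μ ν = 0)
    (hPnn : ∀ t, 1 ≤ t → ∀ μ ν : Fin K, 0 ≤ P t μ ν)
    (hPu : ∀ t, 1 ≤ t → ∀ μ ∈ Mu E, P t μ μ = 1)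
    (hProw : ∀ t, 1 ≤ t → ∀ μ ∈ Ml E, ∑ ν ∈ Nin E μ, P t μ ν = 1)
    (hPα : ∀ t, 1 ≤ t → ∀ ν μ : Fin K, (ν, μ) ∈ E → α ≤ P t μ ν)
    {d : ℕ} (hd : 1 ≤ d) (η : ℝ) (hη : 0 ≤ η)
    (M : ℕ → Fin K → Fin K → Matrix (Fin d) (Fin d) ℝ)
    (hMrow : ∀ t, 1 ≤ t → ∀ μ ∈ Ml E, ∑ ν ∈ Nin E μ, M t μ ν = 1)
    (hM : ∀ t, 1 ≤ t → ∀ ν μ : Fin K, (ν, μ) ∈ E →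
      opNorm (M t μ ν - P t μ ν • (1 : Matrix (Fin d) (Fin d) ℝ)) ≤ η)
    (hc₁0 : 0 < (1 + η / α) * (1 - α ^ K) ^ ((1 : ℝ) / K))
    (hc₁1 : (1 + η / α) * (1 - α ^ K) ^ ((1 : ℝ) / K) < 1) :
    (∀ μ ∈ Mlc E, ∀ t : ℕ, K ≤ t →
      (t : ℝ) * (α ^ K - K * η / (α * (1 - α ^ K) ^ ((1 : ℝ) / K + 1) *
            (1 - (1 + η / α) * (1 - α ^ K) ^ ((1 : ℝ) / K)) ^ 2)) -
          α ^ K * (K - 1) ≤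
        opNorm (∑ x ∈ Finset.Icc 1 t, ∑ v ∈ MlInf E, ∑ ℓ ∈ Finset.range (x + 1),
          ∑ w ∈ (pathsTo E x μ).filter (fun w =>
              w ⟨x - ℓ, Nat.lt_succ_of_le (Nat.sub_le x ℓ)⟩ = v ∧
              ∀ j : Fin (x + 1), x - ℓ < (j : ℕ) → w j ∉ MlInf E),
            pathProd M t x w)) ∧
    (∀ μ ∈ Mlnc E, ∀ t : ℕ, K ≤ t →
      ∑ x ∈ Finset.Icc 1 t, ∑ v ∈ MlInf E, ∑ ℓ ∈ Finset.range (x + 1),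
          ∑ w ∈ (pathsTo E x μ).filter (fun w =>
              w ⟨x - ℓ, Nat.lt_succ_of_le (Nat.sub_le x ℓ)⟩ = v ∧
              ∀ j : Fin (x + 1), x - ℓ < (j : ℕ) → w j ∉ MlInf E),
            pathProd M t x w = 0) :=
  stmt17_general hK E α hα0 hα1 P hPnn hProw hPα hd η hη M hMrow hM hc₁1
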